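/- arXiv:1910.00028 — 7 statements merged into one kernel-verified Lean document; each statement's English description precedes it below -/
import Mathlib

section
/- Let r ≥ 2 and let n_1 ≤ n_2 ≤ ... ≤ n_r be positive integers. If H is a K_r-free subgraph of the complete r-partite graph K(n_1,...,n_r), then e(H) ≤ e(K(n_1,...,n_r)) - n_1·n_2. -/
/-!
Average over the transversals of `K(n_1,…,n_r)`, i.e. the choices of one vertex in each part.
Each transversal spans an `r`-clique of `K(n_1,…,n_r)`, so, `H` being `K_r`-free, it contains a
non-edge of `H`. Conversely a non-edge of `H` between parts `i ≠ j` lies in a `1/(n_i n_j)`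
fraction of all transversals, which is at most `1/(n_1 n_2)`. Hence at least `n_1 n_2` edges
of `K(n_1,…,n_r)` are missing from `H`.
-/

open Finset

theorem Finset.le_card_of_subset_biUnion {α β : Type*} [DecidableEq β] {M : Finset α}
    {F : α → Finset β} {T : Finset β} {c : ℕ} (hcover : T ⊆ M.biUnion F)
    (hsmall : ∀ e ∈ M, c * #(F e) ≤ #T) (hT : T.Nonempty) : c ≤ #M := by
  refine Nat.le_of_mul_le_mul_right ?_ hT.card_pos
  calc c * #T ≤ c * ∑ e ∈ M, #(F e) :=
        Nat.mul_le_mul_left _ ((card_le_card hcover).trans card_biUnion_le)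
    _ = ∑ e ∈ M, c * #(F e) := mul_sum _ _ _
    _ ≤ ∑ _e ∈ M, #T := sum_le_sum hsmall
    _ = #M * #T := by rw [sum_const, smul_eq_mul]

theorem Monotone.mul_le_mul_of_ne {r : ℕ} (hr : 2 ≤ r) {n : Fin r → ℕ} (hn : Monotone n)
    {i j : Fin r} (hij : i ≠ j) :
    n ⟨0, Nat.zero_lt_two.trans_le hr⟩ * n ⟨1, Nat.one_lt_two.trans_le hr⟩ ≤ n i * n j := by
  wlog hlt : i < j generalizing i j
  · rw [mul_comm (n i)]
    exact this hij.symm (hij.lt_or_gt.resolve_left hlt)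
  exact Nat.mul_le_mul (hn (Fin.mk_le_of_le_val (Nat.zero_le _)))
    (hn (Fin.mk_le_of_le_val (by omega)))

section Transversal

variable {ι : Type*} [Fintype ι] {V : ι → Type*}

theorem card_mul_card_mul_card_filter_le_card_pi [DecidableEq ι] [∀ i, Fintype (V i)]
    [∀ i, DecidableEq (V i)] {i j : ι} (hij : i ≠ j) (a : V i) (b : V j) :
    Fintype.card (V i) * Fintype.card (V j) * #{f : ∀ k, V k | f i = a ∧ f j = b} ≤
      Fintype.card (∀ k, V k) := by
  let φ : V i × V j × {f : ∀ k, V k // f i = a ∧ f j = b} → ∀ k, V k :=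
    fun p => Function.update (Function.update p.2.2.1 i p.1) j p.2.1
  have hφ : Function.Injective φ := by
    rintro ⟨a₁, b₁, f₁, hf₁⟩ ⟨a₂, b₂, f₂, hf₂⟩ h
    have hb : b₁ = b₂ := by simpa [φ] using congrFun h j
    have ha : a₁ = a₂ := by simpa [φ, Function.update_of_ne hij] using congrFun h i
    have hf : f₁ = f₂ := by
      funext k
      by_cases hki : k = i
      · subst hki; rw [hf₁.1, hf₂.1]
      by_cases hkj : k = j
      · subst hkj; rw [hf₁.2, hf₂.2]
      simpa [φ, Function.update_of_ne hki, Function.update_of_ne hkj] using congrFun h k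
    subst ha hb hf
    rfl
  simpa [Fintype.card_subtype, mul_assoc] using Fintype.card_le_of_injective φ hφ

namespace SimpleGraph

theorem exists_not_adj_of_cliqueFree {H : SimpleGraph (Σ i, V i)}
    (hH : H.CliqueFree (Fintype.card ι)) (f : ∀ i, V i) :
    ∃ i j, i ≠ j ∧ ¬ H.Adj ⟨i, f i⟩ ⟨j, f j⟩ := by
  by_contra! hadj
  let g : completeGraph ι →g H := ⟨fun i => ⟨i, f i⟩, fun hij => hadj _ _ hij⟩
  exact cliqueFree_iff_top_free.mp hH ⟨⟨g, fun i j h => congrArg Sigma.fst h⟩⟩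

theorem ncard_edgeSet_add_le_of_cliqueFree [∀ i, Fintype (V i)] [∀ i, Nonempty (V i)]
    {H : SimpleGraph (Σ i, V i)} (hsub : H ≤ completeMultipartiteGraph V)
    (hH : H.CliqueFree (Fintype.card ι)) {c : ℕ}
    (hc : ∀ i j, i ≠ j → c ≤ Fintype.card (V i) * Fintype.card (V j)) :
    H.edgeSet.ncard + c ≤ (completeMultipartiteGraph V).edgeSet.ncard := by
  classical
  set K := completeMultipartiteGraph V
  let M := (K.edgeSet \ H.edgeSet).toFinset
  have hsplit : #M + H.edgeSet.ncard = K.edgeSet.ncard := by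
    rw [← Set.ncard_eq_toFinset_card']
    exact Set.ncard_sdiff_add_ncard_of_subset (edgeSet_mono hsub) (Set.toFinite _)
  suffices c ≤ #M by omega
  let F : Sym2 (Σ i, V i) → Finset (∀ i, V i) := fun e => {f | ∀ x ∈ e, f x.1 = x.2}
  refine le_card_of_subset_biUnion (F := F) (T := univ) ?_ ?_ univ_nonempty
  · intro f _
    obtain ⟨i, j, hij, hnadj⟩ := exists_not_adj_of_cliqueFree hH f
    refine mem_biUnion.mpr ⟨s(⟨i, f i⟩, ⟨j, f j⟩), ?_, ?_⟩
    · simpa [M, K] using ⟨hij, hnadj⟩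
    · simp [F]
  · intro e he
    induction e using Sym2.ind with
    | _ x y =>
      have hxy : x.1 ≠ y.1 := by simpa [M, K] using (Set.mem_toFinset.mp he).1
      have hF : F s(x, y) = ({f : ∀ k, V k | f x.1 = x.2 ∧ f y.1 = y.2} : Finset _) := by
        ext f; simp [F]
      calc c * #(F s(x, y)) ≤ Fintype.card (V x.1) * Fintype.card (V y.1) * #(F s(x, y)) :=
            Nat.mul_le_mul_right _ (hc _ _ hxy)
        _ ≤ Fintype.card (∀ k, V k) := by
            rw [hF]; exact card_mul_card_mul_card_filter_le_card_pi hxy x.2 y.2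
        _ = #(univ : Finset (∀ k, V k)) := card_univ.symm

end SimpleGraph

end Transversal

/-- r-partite Turán theorem: a `K_r`-free subgraph of the complete
`r`-partite graph `K(n_1,…,n_r)` with `n_1 ≤ … ≤ n_r` misses at least
`n_1 · n_2` edges. -/
theorem stmt0 (r : ℕ) (hr : 2 ≤ r) (n : Fin r → ℕ)
    (hpos : ∀ i, 0 < n i) (hmono : Monotone n)
    (H : SimpleGraph (Σ i : Fin r, Fin (n i)))
    (hsub : H ≤ SimpleGraph.completeMultipartiteGraph (fun i : Fin r => Fin (n i)))
    (hfree : H.CliqueFree r) :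
    H.edgeSet.ncard + n ⟨0, by omega⟩ * n ⟨1, by omega⟩ ≤
      (SimpleGraph.completeMultipartiteGraph (fun i : Fin r => Fin (n i))).edgeSet.ncard := by
  have : ∀ i, Nonempty (Fin (n i)) := fun i => Fin.pos_iff_nonempty.mp (hpos i)
  refine SimpleGraph.ncard_edgeSet_add_le_of_cliqueFree hsub (by rwa [Fintype.card_fin]) ?_
  intro i j hij
  simpa only [Fintype.card_fin] using hmono.mul_le_mul_of_ne hr hij
end

section
/- For every integer r ≥ 2 and every n ∈ ℕ, the Turán number ex(n, K_{r+1}) satisfies (n²/2)(1 - 1/r) - r/2 ≤ ex(n, K_{r+1}) ≤ (n²/2)(1 - 1/r). -/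
/-!
By Turán's theorem the extremal graph is the Turán graph `T(n, r)`. Adding `r` vertices to
`T(n, r)`, one to each part, adds `n (r - 1) + C(r, 2)` edges, exactly the increase of
`(1 - 1/r) n² / 2`. So the defect `(1 - 1/r) n² / 2 - e(T(n, r))` depends only on `s = n % r`,
and computing it on the complete graph `T(s, r)` gives `s (r - s) / (2 r) ∈ [0, r / 2]`.
-/

/-- The maximum number of edges of a `K_k`-free graph on `n` vertices. -/
noncomputable def exSup (n k : ℕ) : ℕ :=
  sSup {m | ∃ G : SimpleGraph (Fin n), G.CliqueFree k ∧ G.edgeSet.ncard = m}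

open Finset

namespace SimpleGraph

lemma ncard_edgeSet_eq_card_edgeFinset {V : Type*} (G : SimpleGraph V) [Fintype G.edgeSet] :
    G.edgeSet.ncard = #G.edgeFinset := by
  rw [← coe_edgeFinset, Set.ncard_coe_finset]

lemma two_mul_mul_card_edgeFinset_turanGraph {r : ℕ} (hr : 0 < r) (n : ℕ) :
    2 * r * (#(turanGraph n r).edgeFinset : ℝ)
      = (r - 1) * n ^ 2 - (n % r : ℕ) * (r - (n % r : ℕ)) := by
  induction n using Nat.strong_induction_on with
  | _ n ih =>
  rcases lt_or_ge n r with hnr | hrn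
  · have hcomplete : #(turanGraph n r).edgeFinset = n.choose 2 := by
      convert! card_edgeFinset_top_eq_card_choose_two (V := Fin n) using 3
      · exact turanGraph_eq_top.2 (.inr hnr.le)
      · rw [Fintype.card_fin]
    rw [hcomplete, Nat.cast_choose_two, Nat.mod_eq_of_lt hnr]
    ring
  · obtain ⟨m, rfl⟩ := Nat.exists_eq_add_of_le' hrn
    rw [card_edgeFinset_turanGraph_add, Nat.add_mod_right]
    push_cast [Nat.cast_choose_two, Nat.cast_sub (Nat.one_le_iff_ne_zero.2 hr.ne')]
    linear_combination ih m (by omega)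

end SimpleGraph

open SimpleGraph in
lemma exSup_eq_card_edgeFinset_turanGraph {n r : ℕ} (hr : 0 < r) :
    exSup n (r + 1) = #(turanGraph n r).edgeFinset := by
  classical
  refine IsGreatest.csSup_eq
    ⟨⟨_, turanGraph_cliqueFree hr, ncard_edgeSet_eq_card_edgeFinset _⟩, ?_⟩
  rintro _ ⟨G, hG, rfl⟩
  rw [ncard_edgeSet_eq_card_edgeFinset]
  exact (isTuranMaximal_turanGraph hr).2 hG

/-- Turán's theorem (quantitative form): for `r ≥ 2`,
`(n²/2)(1 - 1/r) - r/2 ≤ ex(n, K_{r+1}) ≤ (n²/2)(1 - 1/r)`. -/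
theorem stmt1 (r n : ℕ) (hr : 2 ≤ r) :
    (n : ℝ) ^ 2 / 2 * (1 - 1 / r) - r / 2 ≤ (exSup n (r + 1) : ℝ) ∧
      (exSup n (r + 1) : ℝ) ≤ (n : ℝ) ^ 2 / 2 * (1 - 1 / r) := by
  have hr0 : 0 < r := by omega
  have hrpos : (0 : ℝ) < r := by exact_mod_cast hr0
  set s : ℕ := n % r
  have hs : (s : ℝ) < r := by exact_mod_cast Nat.mod_lt n hr0
  have hex : (exSup n (r + 1) : ℝ) = n ^ 2 / 2 * (1 - 1 / r) - s * (r - s) / (2 * r) := by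
    have hedges := SimpleGraph.two_mul_mul_card_edgeFinset_turanGraph hr0 n
    rw [exSup_eq_card_edgeFinset_turanGraph hr0]
    field_simp
    linarith
  have hdefect_nonneg : 0 ≤ (s : ℝ) * (r - s) / (2 * r) :=
    div_nonneg (mul_nonneg s.cast_nonneg (by linarith)) (by positivity)
  have hdefect_le : (s : ℝ) * (r - s) / (2 * r) ≤ r / 2 := by
    rw [div_le_div_iff₀ (by positivity) two_pos]
    nlinarith
  rw [hex]
  constructor <;> linarith
end

section
/- Let t, r, n be positive integers with r ≥ 2 and let G be an n-vertex K_{r+1}-free graph with e(G) ≥ ex(n, K_{r+1}) - t. Then there exists a partition of V(G) into r parts V_1, ..., V_r such that: (1) the total number of edges inside the parts is at most t; (2) the maximum degree of G equals |V_2| + |V_3| + ... + |V_r|; and (3) the total number of non-edges between distinct parts (i.e., Σ_{i<j} (|V_i||V_j| - e(V_i, V_j))) is at most 2t. -/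
/-- Number of edges of `G` with both endpoints in `A`. -/
noncomputable def eIn {α : Type*} (G : SimpleGraph α) (A : Set α) : ℕ :=
  {e ∈ G.edgeSet | ∀ v ∈ e, v ∈ A}.ncard

/-- Number of edges of `G` with one endpoint in `A` and the other in `B`
(for disjoint `A`, `B`). -/
noncomputable def eBtw {α : Type*} (G : SimpleGraph α) (A B : Set α) : ℕ :=
  {e ∈ G.edgeSet | ∃ u ∈ A, ∃ v ∈ B, e = s(u, v)}.ncard

/-!
Build the greedy chain `V = D₀ ⊇ D₁ ⊇ ⋯` with `D_{k+1} = D_k ∩ N(x_k)`, where `x_k` has maximum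
degree inside `D_k`. The chosen vertices form a clique, so `K_{r+1}`-freeness forces `D_r = ∅`
and the layers `V_k = D_k \ D_{k+1}` (`k < r`) partition the vertex set; as `x₀` has maximum
degree, `Δ(G) = |D₁| = |V₁| + ⋯ + |V_{r-1}|`. A vertex of `V_k` has at most `|D_{k+1}|`
neighbours in `D_k`, and summing over all vertices gives `2·inner + cross ≤ M`, where `M` counts
the edges of the complete `r`-partite graph on the layers. Since
`M ≤ ex(n, K_{r+1}) ≤ e(G) + t = inner + cross + t`, there are at most `t` inner edges and at
most `M - cross ≤ inner + t ≤ 2t` missing cross pairs.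
-/

open Finset

namespace Finset

lemma disjoint_fiber {α ι : Type*} [Fintype α] [DecidableEq ι] (c : α → ι) {i j : ι}
    (hij : i ≠ j) : Disjoint ({a | c a = i} : Finset α) ({a | c a = j} : Finset α) :=
  disjoint_filter.2 fun _ _ hi hj => hij (hi.symm.trans hj)

variable {α β ι : Type*} [Fintype α] [Fintype β] [Fintype ι] [LinearOrder ι]

lemma card_filter_prod_eq_sum (p : α → β → Prop) [DecidableRel p] :
    #{x : α × β | p x.1 x.2} = ∑ a, #{b | p a b} := by
  simp only [card_filter, Fintype.sum_prod_type]

lemma card_filter_lt_eq_sum_sum (Q : α × α → Prop) [DecidablePred Q] (c : α → ι) :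
    #{x : α × α | Q x ∧ c x.1 < c x.2}
      = ∑ i, ∑ j, if i < j then #{x : α × α | Q x ∧ c x.1 = i ∧ c x.2 = j} else 0 := by
  rw [card_eq_sum_card_fiberwise (f := fun x => (c x.1, c x.2)) (t := univ) (by simp),
    Fintype.sum_prod_type]
  refine sum_congr rfl fun i _ => sum_congr rfl fun j _ => ?_
  split_ifs with hij
  · congr 1; ext x; simp only [mem_filter, mem_univ, true_and, Prod.mk.injEq]
    constructor
    · rintro ⟨⟨hQ, -⟩, rfl, rfl⟩; exact ⟨hQ, rfl, rfl⟩
    · rintro ⟨hQ, rfl, rfl⟩; exact ⟨⟨hQ, hij⟩, rfl, rfl⟩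
  · rw [card_eq_zero, filter_eq_empty_iff]
    intro x hx hcx
    simp only [mem_filter, Prod.mk.injEq] at hx hcx
    exact hij (hcx.1 ▸ hcx.2 ▸ hx.2.2)

lemma sum_sum_ite_lt_card_mul_card (c : α → ι) :
    ∑ i, ∑ j, (if i < j then #({a | c a = i} : Finset α) * #({a | c a = j} : Finset α) else 0)
      = #{x : α × α | c x.1 < c x.2} := by
  have h := card_filter_lt_eq_sum_sum (fun _ => True) c
  simp only [true_and] at h
  rw [h]
  refine sum_congr rfl fun i _ => sum_congr rfl fun j _ => ?_
  rw [← card_product]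
  congr 2; ext x; simp

end Finset

namespace SimpleGraph

section Edges

variable {V : Type*} [Fintype V] [DecidableEq V] (G : SimpleGraph V) [DecidableRel G.Adj]

lemma two_mul_card_filter_edgeFinset (P : Sym2 V → Prop) [DecidablePred P] :
    2 * #{e ∈ G.edgeFinset | P e} = #{x : V × V | G.Adj x.1 x.2 ∧ P s(x.1, x.2)} := by
  have hfib := card_eq_sum_card_fiberwise (s := ({d : G.Dart | P d.edge} : Finset G.Dart))
    (t := {e ∈ G.edgeFinset | P e}) (f := Dart.edge) (fun d hd => by
      simp only [coe_filter, mem_univ, true_and, Set.mem_ofPred_eq] at hd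
      simp [hd, d.edge_mem])
  rw [sum_congr rfl fun e he => ?_, sum_const, smul_eq_mul, mul_comm] at hfib
  · rw [← hfib]
    refine card_bij' (fun d _ ↦ d.toProd) (fun x h ↦ ⟨x, (mem_filter.1 h).2.1⟩) ?_ ?_ ?_ ?_
    · intro d hd; exact mem_filter.2 ⟨mem_univ _, d.adj, (mem_filter.1 hd).2⟩
    · intro x hx; simpa using (mem_filter.1 hx).2.2
    · intro d _; rfl
    · intro x _; rfl
  · rw [mem_filter, mem_edgeFinset] at he
    rw [← G.dart_edge_fiber_card e he.1]
    congr 1; ext d; simp only [mem_filter, mem_univ, true_and, and_iff_right_iff_imp]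
    rintro rfl; exact he.2

lemma eIn_eq_card (A : Finset V) :
    eIn G (A : Set V) = #{e ∈ G.edgeFinset | ∀ v ∈ e, v ∈ A} := by
  rw [eIn, ← Set.ncard_coe_finset]; congr 1; ext e; simp

lemma two_mul_eIn (A : Finset V) :
    2 * eIn G (A : Set V) = #{x : V × V | G.Adj x.1 x.2 ∧ x.1 ∈ A ∧ x.2 ∈ A} := by
  rw [eIn_eq_card, two_mul_card_filter_edgeFinset]; simp

lemma eBtw_eq_card {A B : Finset V} (hAB : Disjoint A B) :
    eBtw G (A : Set V) (B : Set V) = #{x : V × V | G.Adj x.1 x.2 ∧ x.1 ∈ A ∧ x.2 ∈ B} := by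
  rw [eBtw, ← Set.ncard_coe_finset, ← Set.InjOn.ncard_image (f := fun x : V × V => s(x.1, x.2))]
  · congr 1; ext e
    simp only [Set.mem_image, coe_filter, mem_univ, true_and, Set.mem_ofPred_eq, mem_coe]
    constructor
    · rintro ⟨he, u, hu, v, hv, rfl⟩; exact ⟨(u, v), ⟨he, hu, hv⟩, rfl⟩
    · rintro ⟨⟨u, v⟩, ⟨he, hu, hv⟩, rfl⟩; exact ⟨he, u, hu, v, hv, rfl⟩
  · rintro ⟨u, v⟩ h ⟨u', v'⟩ h' he
    simp only [coe_filter, mem_univ, true_and, Set.mem_ofPred_eq, Sym2.eq_iff] at h h' he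
    rcases he with ⟨rfl, rfl⟩ | ⟨rfl, rfl⟩
    · rfl
    · exact absurd h'.2.2 (Finset.disjoint_left.1 hAB h.2.1)

lemma eBtw_le_card_mul_card {A B : Finset V} (hAB : Disjoint A B) :
    eBtw G (A : Set V) (B : Set V) ≤ #A * #B := by
  rw [eBtw_eq_card G hAB, ← card_product]
  exact card_le_card fun x hx => by simp only [mem_filter, mem_product] at hx ⊢; exact hx.2.2

end Edges

section Layers

variable {V ι : Type*} [Fintype V] [LinearOrder ι] (G : SimpleGraph V) [DecidableRel G.Adj]
  (c : V → ι)

lemma two_mul_card_edgeFinset_eq_card_adj_eq_add :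
    2 * #G.edgeFinset = #{x : V × V | G.Adj x.1 x.2 ∧ c x.1 = c x.2}
      + 2 * #{x : V × V | G.Adj x.1 x.2 ∧ c x.1 < c x.2} := by
  have hswap : #{x : V × V | G.Adj x.1 x.2 ∧ c x.2 < c x.1}
      = #{x : V × V | G.Adj x.1 x.2 ∧ c x.1 < c x.2} :=
    card_equiv (Equiv.prodComm V V) (by simp [G.adj_comm])
  rw [two_mul_card_edgeFinset, two_mul, ← add_assoc]
  nth_rw 2 [← hswap]
  simp only [card_filter, ← sum_add_distrib]
  refine sum_congr rfl fun x _ => ?_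
  by_cases hadj : G.Adj x.1 x.2
  · rcases lt_trichotomy (c x.1) (c x.2) with h | h | h
    · simp [hadj, h, h.ne, h.not_gt]
    · simp [hadj, h]
    · simp [hadj, h, h.ne', h.not_gt]
  · simp [hadj]

lemma card_adj_eq_add_card_adj_lt_le_card_lt [DecidableEq V]
    (h : ∀ u, #{v | G.Adj u v ∧ c u ≤ c v} ≤ #{v | c u < c v}) :
    #{x : V × V | G.Adj x.1 x.2 ∧ c x.1 = c x.2} + #{x : V × V | G.Adj x.1 x.2 ∧ c x.1 < c x.2}
      ≤ #{x : V × V | c x.1 < c x.2} := by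
  have hsplit : #{x : V × V | G.Adj x.1 x.2 ∧ c x.1 ≤ c x.2}
      = #{x : V × V | G.Adj x.1 x.2 ∧ c x.1 = c x.2}
        + #{x : V × V | G.Adj x.1 x.2 ∧ c x.1 < c x.2} := by
    rw [← card_union_of_disjoint (disjoint_filter.2 fun x _ h1 h2 => h2.2.ne h1.2)]
    congr 1; ext x; simp only [mem_filter, mem_univ, true_and, mem_union, le_iff_eq_or_lt]
    tauto
  rw [← hsplit, card_filter_prod_eq_sum (fun u v => G.Adj u v ∧ c u ≤ c v),
    card_filter_prod_eq_sum (fun u v => c u < c v)]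
  exact sum_le_sum fun u _ => h u

lemma card_edgeFinset_comap_top :
    #((⊤ : SimpleGraph ι).comap c).edgeFinset = #{x : V × V | c x.1 < c x.2} := by
  have h := two_mul_card_edgeFinset_eq_card_adj_eq_add ((⊤ : SimpleGraph ι).comap c) c
  simp only [comap_adj, top_adj] at h
  have hin : #{x : V × V | c x.1 ≠ c x.2 ∧ c x.1 = c x.2} = 0 :=
    card_eq_zero.2 (filter_eq_empty_iff.2 fun _ _ h => h.1 h.2)
  have hup : #{x : V × V | c x.1 ≠ c x.2 ∧ c x.1 < c x.2} = #{x : V × V | c x.1 < c x.2} :=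
    congrArg card (filter_congr fun _ _ => and_iff_right_of_imp ne_of_lt)
  omega

variable [Fintype ι] [DecidableEq V]

lemma two_mul_sum_eIn_fiber :
    2 * ∑ i, eIn G (({u | c u = i} : Finset V) : Set V)
      = #{x : V × V | G.Adj x.1 x.2 ∧ c x.1 = c x.2} := by
  rw [mul_sum, card_eq_sum_card_fiberwise (f := fun x => c x.1) (t := univ) (by simp)]
  refine sum_congr rfl fun i _ => ?_
  rw [two_mul_eIn]
  congr 1; ext x; simp only [mem_filter, mem_univ, true_and]
  constructor
  · rintro ⟨hadj, h1, h2⟩; exact ⟨⟨hadj, h1.trans h2.symm⟩, h1⟩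
  · rintro ⟨⟨hadj, h⟩, h1⟩; exact ⟨hadj, h1, h ▸ h1⟩

lemma sum_eBtw_fiber :
    ∑ i, ∑ j, (if i < j then
        eBtw G (({u | c u = i} : Finset V) : Set V) (({u | c u = j} : Finset V) : Set V) else 0)
      = #{x : V × V | G.Adj x.1 x.2 ∧ c x.1 < c x.2} := by
  rw [card_filter_lt_eq_sum_sum]
  refine sum_congr rfl fun i _ => sum_congr rfl fun j _ => ?_
  split_ifs with hij
  · rw [eBtw_eq_card G (disjoint_fiber c hij.ne)]; simp
  · rfl

lemma sum_card_mul_card_sub_eBtw_fiber :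
    ∑ i, ∑ j, (if i < j then
        #({u | c u = i} : Finset V) * #({u | c u = j} : Finset V)
          - eBtw G (({u | c u = i} : Finset V) : Set V) (({u | c u = j} : Finset V) : Set V)
        else 0)
      = #{x : V × V | c x.1 < c x.2} - #{x : V × V | G.Adj x.1 x.2 ∧ c x.1 < c x.2} := by
  rw [← sum_sum_ite_lt_card_mul_card c, ← sum_eBtw_fiber G c]
  refine eq_tsub_of_add_eq ?_
  rw [← sum_add_distrib]
  refine sum_congr rfl fun i _ => ?_
  rw [← sum_add_distrib]
  refine sum_congr rfl fun j _ => ?_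
  split_ifs with hij
  · exact Nat.sub_add_cancel (G.eBtw_le_card_mul_card (disjoint_fiber c hij.ne))
  · rfl

end Layers

section Greedy

variable {V : Type*} [Fintype V] [DecidableEq V] (G : SimpleGraph V) [DecidableRel G.Adj]

noncomputable def greedyStep (A : Finset V) : Finset V :=
  if h : A.Nonempty then
    A ∩ G.neighborFinset (A.exists_max_image (fun v => #(A ∩ G.neighborFinset v)) h).choose
  else ∅

variable {G}

lemma greedyStep_subset (A : Finset V) : G.greedyStep A ⊆ A := by
  unfold greedyStep
  split_ifs
  · exact inter_subset_left
  · exact empty_subset A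

lemma card_inter_neighborFinset_le_card_greedyStep {A : Finset V} {v : V} (hv : v ∈ A) :
    #(A ∩ G.neighborFinset v) ≤ #(G.greedyStep A) := by
  rw [greedyStep, dif_pos ⟨v, hv⟩]
  exact (A.exists_max_image (fun v => #(A ∩ G.neighborFinset v)) ⟨v, hv⟩).choose_spec.2 v hv

lemma exists_greedyStep_eq {A : Finset V} (h : (G.greedyStep A).Nonempty) :
    ∃ x ∈ A, G.greedyStep A = A ∩ G.neighborFinset x := by
  have hA : A.Nonempty := h.mono (greedyStep_subset A)
  rw [greedyStep, dif_pos hA]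
  exact ⟨_, (A.exists_max_image (fun v => #(A ∩ G.neighborFinset v)) hA).choose_spec.1, rfl⟩

lemma iterate_greedyStep_subset (k : ℕ) (A : Finset V) : G.greedyStep^[k] A ⊆ A := by
  induction k with
  | zero => exact Subset.rfl
  | succ k ih =>
    rw [Function.iterate_succ_apply']
    exact (greedyStep_subset _).trans ih

lemma exists_isNClique_of_nonempty_iterate_greedyStep (k : ℕ) {A : Finset V}
    (h : (G.greedyStep^[k] A).Nonempty) : ∃ s ⊆ A, G.IsNClique (k + 1) s := by
  induction k generalizing A with
  | zero =>
    obtain ⟨v, hv⟩ := h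
    exact ⟨{v}, singleton_subset_iff.2 hv, isNClique_singleton.2 rfl⟩
  | succ k ih =>
    rw [Function.iterate_succ_apply] at h
    obtain ⟨s, hs, hclique⟩ := ih h
    obtain ⟨x, hx, hstep⟩ := exists_greedyStep_eq (h.mono (iterate_greedyStep_subset k _))
    rw [hstep] at hs
    refine ⟨insert x s, insert_subset hx (hs.trans inter_subset_left), hclique.insert ?_⟩
    exact fun b hb => (G.mem_neighborFinset x b).1 (mem_inter.1 (hs hb)).2

variable (G)

noncomputable def greedyChain (k : ℕ) : Finset V := G.greedyStep^[k] univ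

lemma greedyChain_zero : G.greedyChain 0 = univ := rfl

lemma greedyChain_succ (k : ℕ) : G.greedyChain (k + 1) = G.greedyStep (G.greedyChain k) :=
  Function.iterate_succ_apply' ..

lemma greedyChain_antitone : Antitone G.greedyChain :=
  antitone_nat_of_succ_le fun k => (G.greedyChain_succ k).symm ▸ greedyStep_subset _

lemma greedyChain_eq_empty_of_cliqueFree {r : ℕ} (h : G.CliqueFree (r + 1)) :
    G.greedyChain r = ∅ := by
  by_contra hne
  obtain ⟨s, -, hs⟩ :=
    exists_isNClique_of_nonempty_iterate_greedyStep r (nonempty_iff_ne_empty.2 hne)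
  exact h s hs

lemma exists_notMem_greedyChain (u : V) : ∃ k, u ∉ G.greedyChain (k + 1) :=
  ⟨Fintype.card V, by
    rw [G.greedyChain_eq_empty_of_cliqueFree (cliqueFree_of_card_lt (by omega))]
    exact notMem_empty u⟩

noncomputable def greedyDepth (u : V) : ℕ := Nat.find (G.exists_notMem_greedyChain u)

variable {G}

lemma mem_greedyChain_iff {k : ℕ} {u : V} : u ∈ G.greedyChain k ↔ k ≤ G.greedyDepth u := by
  constructor
  · intro hu
    by_contra! hlt
    exact Nat.find_spec (G.exists_notMem_greedyChain u) (G.greedyChain_antitone hlt hu)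
  · intro hk
    cases k with
    | zero => exact mem_univ u
    | succ k => exact not_not.1 (Nat.find_min (G.exists_notMem_greedyChain u) hk)

lemma greedyDepth_lt_of_cliqueFree {r : ℕ} (h : G.CliqueFree (r + 1)) (u : V) :
    G.greedyDepth u < r := by
  by_contra! hle
  simpa [G.greedyChain_eq_empty_of_cliqueFree h] using mem_greedyChain_iff.2 hle

variable (G)

lemma card_adj_greedyDepth_le_le (u : V) :
    #{v | G.Adj u v ∧ G.greedyDepth u ≤ G.greedyDepth v}
      ≤ #{v | G.greedyDepth u < G.greedyDepth v} := by
  have hu : u ∈ G.greedyChain (G.greedyDepth u) := mem_greedyChain_iff.2 le_rfl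
  convert card_inter_neighborFinset_le_card_greedyStep (G := G) hu using 2
  · ext v; simp [mem_greedyChain_iff, and_comm]
  · rw [← greedyChain_succ]; ext v; simp [mem_greedyChain_iff]

lemma maxDegree_eq_card_greedyDepth_pos : G.maxDegree = #{u | 0 < G.greedyDepth u} := by
  have hchain : ({u | 0 < G.greedyDepth u} : Finset V) = G.greedyChain 1 := by
    ext u; simp [mem_greedyChain_iff, Nat.one_le_iff_ne_zero, Nat.pos_iff_ne_zero]
  rw [hchain, greedyChain_succ, greedyChain_zero]
  refine le_antisymm (maxDegree_le_of_forall_degree_le _ _ fun v => ?_) ?_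
  · simpa using card_inter_neighborFinset_le_card_greedyStep (G := G) (mem_univ v)
  · rcases (G.greedyStep univ).eq_empty_or_nonempty with h | h
    · simp [h]
    · obtain ⟨x, -, hx⟩ := exists_greedyStep_eq h
      rw [hx, univ_inter, card_neighborFinset_eq_degree]
      exact G.degree_le_maxDegree x

end Greedy

end SimpleGraph

lemma exSup_bddAbove (n k : ℕ) :
    BddAbove {m | ∃ G : SimpleGraph (Fin n), G.CliqueFree k ∧ G.edgeSet.ncard = m} :=
  ⟨Nat.card (Sym2 (Fin n)), by rintro m ⟨G, -, rfl⟩; exact Set.ncard_le_card _⟩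

lemma card_lt_le_exSup {n r : ℕ} (c : Fin n → Fin r) :
    #{x : Fin n × Fin n | c x.1 < c x.2} ≤ exSup n (r + 1) := by
  rw [← SimpleGraph.card_edgeFinset_comap_top c]
  refine le_csSup (exSup_bddAbove n (r + 1)) ⟨(⊤ : SimpleGraph (Fin r)).comap c, ?_, ?_⟩
  · exact SimpleGraph.Colorable.cliqueFree ⟨SimpleGraph.Coloring.mk c fun h => h⟩ (lt_add_one r)
  · rw [← SimpleGraph.coe_edgeFinset, Set.ncard_coe_finset]

/-- Füredi's partition lemma. -/
theorem stmt2 (t r n : ℕ) (hr : 2 ≤ r)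
    (G : SimpleGraph (Fin n)) [DecidableRel G.Adj]
    (hfree : G.CliqueFree (r + 1))
    (hedges : exSup n (r + 1) ≤ G.edgeSet.ncard + t) :
    ∃ V : Fin r → Finset (Fin n),
      (∀ i j, i ≠ j → Disjoint (V i) (V j)) ∧
      (Finset.univ.biUnion V = Finset.univ) ∧
      (∑ i, eIn G (V i : Set (Fin n))) ≤ t ∧
      G.maxDegree = ∑ i ∈ Finset.univ.erase ⟨0, by omega⟩, (V i).card ∧
      (∑ i, ∑ j, if i < j then
          (V i).card * (V j).card - eBtw G (V i : Set (Fin n)) (V j : Set (Fin n))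
        else 0) ≤ 2 * t := by
  let c : Fin n → Fin r := fun u => ⟨G.greedyDepth u, G.greedyDepth_lt_of_cliqueFree hfree u⟩
  have hkey : ∀ u, #{v | G.Adj u v ∧ c u ≤ c v} ≤ #{v | c u < c v} :=
    G.card_adj_greedyDepth_le_le
  have hdeg : G.maxDegree = #{u | c u ≠ ⟨0, by omega⟩} := by
    rw [G.maxDegree_eq_card_greedyDepth_pos]
    congr 1; ext u; simp [c, Fin.ext_iff, Nat.pos_iff_ne_zero]
  have hin := G.two_mul_sum_eIn_fiber c
  have hE := G.two_mul_card_edgeFinset_eq_card_adj_eq_add c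
  have hsum := G.card_adj_eq_add_card_adj_lt_le_card_lt c hkey
  have hex := card_lt_le_exSup c
  have hmiss := G.sum_card_mul_card_sub_eBtw_fiber c
  rw [← SimpleGraph.coe_edgeFinset, Set.ncard_coe_finset] at hedges
  refine ⟨fun i => {u | c u = i}, fun i j hij => disjoint_fiber c hij, by ext; simp, ?_, ?_, ?_⟩
  · beta_reduce
    omega
  · rw [hdeg, sum_card_fiberwise_eq_card_filter]
    simp
  · beta_reduce
    omega
end

section
/- Let G be a K_{r+1}-free graph, let X_1, ..., X_r be disjoint vertex subsets, and let u be a vertex. Then min over pairs i ≠ j of |N(u) ∩ X_i|·|N(u) ∩ X_j| is at most the total number of non-edges between distinct parts X_1, ..., X_r, i.e., at most Σ_{1≤i<j≤r} (|X_i||X_j| - e(X_i,X_j)), provided additionally that each X_i is an independent set. -/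
open Finset Fintype

lemma Fintype.card_filter_piFinset_eq_and_eq_mul {ι β : Type*} [Fintype ι] [DecidableEq ι]
    [DecidableEq β] (s : ι → Finset β) {i j : ι} (hij : i ≠ j) {a b : β} (ha : a ∈ s i)
    (hb : b ∈ s j) :
    #{f ∈ piFinset s | f i = a ∧ f j = b} * (#(s i) * #(s j)) = ∏ k, #(s k) := by
  have hfiber : {f ∈ piFinset s | f i = a ∧ f j = b} =
      {f ∈ piFinset (Function.update s i {a}) | f j = b} := by
    rw [piFinset_update_singleton_eq_filter_piFinset_eq _ _ ha, filter_filter]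
  have hb' : b ∈ Function.update s i {a} j := by rwa [Function.update_of_ne hij.symm]
  have hi : i ∈ univ.erase j := mem_erase.2 ⟨hij, mem_univ i⟩
  have hrest : ∏ k ∈ (univ.erase j).erase i, #(Function.update s i {a} k) =
      ∏ k ∈ (univ.erase j).erase i, #(s k) :=
    Finset.prod_congr rfl fun k hk => by rw [Function.update_of_ne (ne_of_mem_erase hk)]
  rw [hfiber, card_filter_piFinset_eq_of_mem _ _ hb', ← mul_prod_erase _ _ hi,
    Function.update_self, card_singleton, one_mul, hrest, ← mul_assoc, prod_erase_mul _ _ hi,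
    prod_erase_mul _ _ (mem_univ j)]

namespace SimpleGraph

variable {α : Type*} {G : SimpleGraph α}

lemma CliqueFree.not_pairwise_adj_of_forall_adj {r : ℕ} (hG : G.CliqueFree (r + 1)) {u : α}
    {f : Fin r → α} (hu : ∀ i, G.Adj u (f i)) : ¬Pairwise fun i j => G.Adj (f i) (f j) := by
  intro hf
  classical
  have hinj : Function.Injective f := fun i j hij => by_contra fun hne => (hf hne).ne hij
  have hclique : G.IsNClique r (univ.image f) := by
    refine ⟨?_, by rw [card_image_of_injective _ hinj, card_univ, Fintype.card_fin]⟩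
    simp only [coe_image, coe_univ, Set.image_univ]
    rintro _ ⟨i, rfl⟩ _ ⟨j, rfl⟩ hne
    exact hf fun h => hne (congrArg f h)
  refine hG _ (hclique.insert (a := u) ?_)
  simpa only [mem_image, mem_univ, true_and, forall_exists_index, forall_apply_eq_imp_iff]

variable (G) [DecidableRel G.Adj]

def nonAdjPairs (A B : Finset α) : Finset (α × α) := {p ∈ A ×ˢ B | ¬G.Adj p.1 p.2}

variable {G}

lemma nonAdjPairs_mono {A A' B B' : Finset α} (hA : A' ⊆ A) (hB : B' ⊆ B) :
    G.nonAdjPairs A' B' ⊆ G.nonAdjPairs A B :=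
  filter_subset_filter _ (product_subset_product hA hB)

lemma eBtw_le_card_filter_adj (A B : Finset α) :
    eBtw G A B ≤ #{p ∈ A ×ˢ B | G.Adj p.1 p.2} := by
  calc eBtw G A B
      ≤ ((fun p : α × α => s(p.1, p.2)) '' ↑{p ∈ A ×ˢ B | G.Adj p.1 p.2}).ncard := by
        refine Set.ncard_le_ncard ?_ (Set.toFinite _)
        rintro _ ⟨he, a, ha, b, hb, rfl⟩
        exact ⟨(a, b), by simp_all, rfl⟩
    _ ≤ _ := (Set.ncard_image_le (Finset.finite_toSet _)).trans (Set.ncard_coe_finset _).le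

lemma card_nonAdjPairs_le_sub_eBtw (A B : Finset α) :
    #(G.nonAdjPairs A B) ≤ #A * #B - eBtw G A B := by
  have hsplit := card_filter_add_card_filter_not (s := A ×ˢ B)
    (fun p : α × α => G.Adj p.1 p.2)
  have hle := eBtw_le_card_filter_adj (G := G) A B
  rw [card_product] at hsplit
  unfold nonAdjPairs
  omega

variable {ι : Type*} [DecidableEq α] [Fintype ι]

lemma card_filter_piFinset_not_adj_mul [DecidableEq ι] (Y : ι → Finset α) {i j : ι}
    (hij : i ≠ j) :
    #{f ∈ piFinset Y | ¬G.Adj (f i) (f j)} * (#(Y i) * #(Y j)) =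
      #(G.nonAdjPairs (Y i) (Y j)) * ∏ k, #(Y k) := by
  have hmaps : ∀ f ∈ {f ∈ piFinset Y | ¬G.Adj (f i) (f j)},
      (f i, f j) ∈ G.nonAdjPairs (Y i) (Y j) := fun f hf => by
    simp only [mem_filter, mem_piFinset] at hf
    exact mem_filter.2 ⟨mem_product.2 ⟨hf.1 i, hf.1 j⟩, hf.2⟩
  rw [card_eq_sum_card_fiberwise hmaps, Finset.sum_mul]
  refine sum_const_nat fun p hp => ?_
  obtain ⟨hpY, hpG⟩ := mem_filter.1 hp
  rw [filter_filter, ← card_filter_piFinset_eq_and_eq_mul Y hij (mem_product.1 hpY).1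
    (mem_product.1 hpY).2]
  congr 2
  refine filter_congr fun f _ => ⟨fun h => Prod.ext_iff.1 h.2, fun h => ?_⟩
  rw [h.1, h.2]
  exact ⟨hpG, rfl⟩

theorem exists_card_mul_card_le_sum_card_nonAdjPairs [LinearOrder ι] [Nontrivial ι]
    (Y : ι → Finset α) (hY : ∀ f ∈ piFinset Y, ¬Pairwise fun i j => G.Adj (f i) (f j)) :
    ∃ i j, i ≠ j ∧
      #(Y i) * #(Y j) ≤ ∑ i, ∑ j, if i < j then #(G.nonAdjPairs (Y i) (Y j)) else 0 := by
  by_contra! hbig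
  set M := ∑ i, ∑ j, if i < j then #(G.nonAdjPairs (Y i) (Y j)) else 0
  have hpos : ∀ i, 0 < #(Y i) := fun i => by
    obtain ⟨j, hj⟩ := exists_ne i
    exact Nat.pos_of_ne_zero fun h0 => by simpa [h0] using hbig i j hj.symm
  set P : Finset (ι × ι) := {p | p.1 < p.2}
  have hM : M = ∑ p ∈ P, #(G.nonAdjPairs (Y p.1) (Y p.2)) := by
    rw [sum_filter, ← univ_product_univ, sum_product]
  have hcover : piFinset Y ⊆ P.biUnion fun p => {f ∈ piFinset Y | ¬G.Adj (f p.1) (f p.2)} := by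
    intro f hf
    obtain ⟨i, j, hij, hnadj⟩ : ∃ i j, i ≠ j ∧ ¬G.Adj (f i) (f j) := by
      simpa [Pairwise] using hY f hf
    simp only [mem_biUnion, mem_filter, mem_univ, true_and, P]
    rcases hij.lt_or_gt with hlt | hgt
    · exact ⟨(i, j), hlt, hf, hnadj⟩
    · exact ⟨(j, i), hgt, hf, fun h => hnadj h.symm⟩
  have hcount : (∏ k, #(Y k)) * (M + 1) ≤ M * ∏ k, #(Y k) :=
    calc (∏ k, #(Y k)) * (M + 1)
        ≤ (∑ p ∈ P, #{f ∈ piFinset Y | ¬G.Adj (f p.1) (f p.2)}) * (M + 1) := by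
          rw [← card_piFinset]
          gcongr
          exact (card_le_card hcover).trans card_biUnion_le
      _ ≤ ∑ p ∈ P, #{f ∈ piFinset Y | ¬G.Adj (f p.1) (f p.2)} * (#(Y p.1) * #(Y p.2)) := by
          rw [sum_mul]
          gcongr with p hp
          exact hbig _ _ (mem_filter.1 hp).2.ne
      _ = M * ∏ k, #(Y k) := by
          rw [hM, sum_mul]
          exact Finset.sum_congr rfl fun p hp =>
            card_filter_piFinset_not_adj_mul Y (mem_filter.1 hp).2.ne
  have hprod : 0 < ∏ k, #(Y k) := prod_pos fun k _ => hpos k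
  linarith

end SimpleGraph

theorem stmt8_general (r n : ℕ) (hr : 2 ≤ r) (G : SimpleGraph (Fin n)) [DecidableRel G.Adj]
    (hfree : G.CliqueFree (r + 1))
    (X : Fin r → Finset (Fin n))
    (u : Fin n) :
    ∃ i j, i ≠ j ∧
      ((X i).filter (fun v => G.Adj u v)).card *
        ((X j).filter (fun v => G.Adj u v)).card ≤
      ∑ i, ∑ j, if i < j then
          (X i).card * (X j).card - eBtw G (X i : Set (Fin n)) (X j : Set (Fin n))
        else 0 := by
  have : Nontrivial (Fin r) := Fin.nontrivial_iff_two_le.mpr hr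
  set Y : Fin r → Finset (Fin n) := fun i => (X i).filter (fun v => G.Adj u v)
  have hY : ∀ f ∈ piFinset Y, ¬Pairwise fun i j => G.Adj (f i) (f j) := fun f hf =>
    hfree.not_pairwise_adj_of_forall_adj fun i => (mem_filter.1 (mem_piFinset.1 hf i)).2
  obtain ⟨i, j, hij, hle⟩ := SimpleGraph.exists_card_mul_card_le_sum_card_nonAdjPairs Y hY
  refine ⟨i, j, hij, hle.trans (sum_le_sum fun i _ => sum_le_sum fun j _ => ?_)⟩
  split_ifs
  · exact (card_le_card <|
      SimpleGraph.nonAdjPairs_mono (filter_subset _ _) (filter_subset _ _)).trans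
        (SimpleGraph.card_nonAdjPairs_le_sub_eBtw _ _)
  · rfl

/-- For a vertex `u` of a `K_{r+1}`-free graph and disjoint independent sets
`X_1, …, X_r`, some pair of neighborhoods `N(u) ∩ X_i`, `N(u) ∩ X_j` has
product of sizes at most the number of non-edges between the parts. -/
theorem stmt8 (r n : ℕ) (hr : 2 ≤ r) (G : SimpleGraph (Fin n)) [DecidableRel G.Adj]
    (hfree : G.CliqueFree (r + 1))
    (X : Fin r → Finset (Fin n))
    (hdisj : ∀ i j, i ≠ j → Disjoint (X i) (X j))
    (hindep : ∀ i, ∀ v ∈ X i, ∀ w ∈ X i, ¬ G.Adj v w)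
    (u : Fin n) :
    ∃ i j, i ≠ j ∧
      ((X i).filter (fun v => G.Adj u v)).card *
        ((X j).filter (fun v => G.Adj u v)).card ≤
      ∑ i, ∑ j, if i < j then
          (X i).card * (X j).card - eBtw G (X i : Set (Fin n)) (X j : Set (Fin n))
        else 0 :=
  stmt8_general r n hr G hfree X u
end

section
/- Let H be a complete blow-up of C_5 with parts A, X, B, C, D (in cyclic order), possibly joined completely to additional independent sets X_1, ..., X_{r-2}. If |X| ≤ |A| and |X| ≤ |B| and |A|, |B| are the two smallest among {|A|,|B|,|C|,|D|,|X_1|,...,|X_{r-2}|} apart from |X|, then the minimum number of edges to remove to make the graph r-partite equals |X|·min(|A|,|B|). -/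
/-- The blow-up of a graph `H`. -/
def blowup {α : Type*} (H : SimpleGraph α) (m : α → ℕ) :
    SimpleGraph (Σ v : α, Fin (m v)) where
  Adj x y := H.Adj x.1 y.1
  symm := ⟨fun _ _ h => H.adj_symm h⟩
  loopless := ⟨fun x h => H.irrefl h⟩

/-- The join `G ⊗ H` of two graphs. -/
def join {α β : Type*} (G : SimpleGraph α) (H : SimpleGraph β) :
    SimpleGraph (α ⊕ β) where
  Adj x y :=
    match x, y with
    | .inl a, .inl b => G.Adj a b
    | .inr a, .inr b => H.Adj a b
    | .inl _, .inr _ => True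
    | .inr _, .inl _ => True
  symm := ⟨fun x y h => by cases x <;> cases y <;> simp_all [SimpleGraph.adj_comm]⟩
  loopless := ⟨fun x h => by cases x <;> simp_all⟩

/-- The 5-cycle on `ZMod 5`; in cyclic order the parts of its blow-up below
are `X = 0, B = 1, C = 2, D = 3, A = 4`. -/
def C5 : SimpleGraph (ZMod 5) := SimpleGraph.fromRel (fun i j => i = j + 1)

/-- Minimum number of edges whose deletion makes `G` `r`-partite. -/
noncomputable def Dr {V : Type*} (G : SimpleGraph V) (r : ℕ) : ℕ :=
  sInf {c | ∃ S : Set (Sym2 V), S ⊆ G.edgeSet ∧ S.ncard = c ∧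
    (G.deleteEdges S).Colorable r}

/-!
Upper bound: the part graph `K_{r-2} ⊗ C₅` minus the edge `XA` (or `XB`) is `r`-colourable,
so deleting the `|X|·|A|` blow-up edges between `X` and `A` leaves an `r`-colourable graph.

Lower bound: if `n p k` vertices of part `p` get colour `k`, the blow-up has
`∑_{pq ∈ E} ∑_k n p k * n q k` monochromatic edges. This count is affine in each row `n p`, so
the rows can be made monochromatic one at a time without increasing it. A colouring constant on
parts is a colouring of the part graph, which is not `r`-colourable, so some edge `pq` of the
part graph is monochromatic and contributes `|p|·|q| ≥ |X|·min(|A|,|B|)` edges, all of which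
must be deleted.
-/

open Finset Matrix

section Weight

variable {P K : Type*} [Fintype P] [Fintype K] (H : SimpleGraph P) [DecidableRel H.Adj]

def monoWeight (n : P → K → ℕ) : ℕ :=
  ∑ p, ∑ q, if H.Adj p q then n p ⬝ᵥ n q else 0

def nbhdLoad (n : P → K → ℕ) (p : P) : K → ℕ :=
  fun k => ∑ q, if H.Adj p q then n q k else 0

lemma dotProduct_nbhdLoad (n : P → K → ℕ) (p : P) (v : K → ℕ) :
    v ⬝ᵥ nbhdLoad H n p = ∑ q, if H.Adj p q then v ⬝ᵥ n q else 0 := by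
  simp only [dotProduct, nbhdLoad, Finset.mul_sum, mul_ite, mul_zero]
  rw [Finset.sum_comm]
  exact Finset.sum_congr rfl fun q _ => by split_ifs <;> simp

lemma monoWeight_eq_add [DecidableEq P] (n : P → K → ℕ) (p : P) :
    monoWeight H n = 2 * (n p ⬝ᵥ nbhdLoad H n p) +
      ∑ a ∈ univ.erase p, ∑ b ∈ univ.erase p, if H.Adj a b then n a ⬝ᵥ n b else 0 := by
  have hrow : ∀ a, (∑ b, if H.Adj a b then n a ⬝ᵥ n b else 0) =
      (if H.Adj p a then n p ⬝ᵥ n a else 0) +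
        ∑ b ∈ univ.erase p, if H.Adj a b then n a ⬝ᵥ n b else 0 := fun a => by
    simp only [← Finset.add_sum_erase _ _ (mem_univ p), H.adj_comm a p, dotProduct_comm (n a)]
  rw [monoWeight, ← Finset.add_sum_erase _ _ (mem_univ p), hrow p,
    Finset.sum_congr rfl fun a _ => hrow a, Finset.sum_add_distrib, dotProduct_nbhdLoad,
    ← Finset.add_sum_erase _ _ (mem_univ p)]
  simp only [H.irrefl, if_false, zero_add]
  ring

lemma two_mul_dotProduct_le_monoWeight (n : P → K → ℕ) {p q : P} (h : H.Adj p q) :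
    2 * (n p ⬝ᵥ n q) ≤ monoWeight H n := by
  classical
  have hq : n q ≤ nbhdLoad H n p := fun k => show n q k ≤ ∑ _, _ by
    simpa [h] using Finset.single_le_sum (f := fun q => if H.Adj p q then n q k else 0)
      (fun _ _ => Nat.zero_le _) (mem_univ q)
  rw [monoWeight_eq_add H n p]
  have hdot := dotProduct_le_dotProduct_of_nonneg_left hq (fun k => Nat.zero_le (n p k))
  omega

lemma monoWeight_update_add [DecidableEq P] (n : P → K → ℕ) (p : P) (v : K → ℕ) :
    monoWeight H (Function.update n p v) + 2 * (n p ⬝ᵥ nbhdLoad H n p) =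
      monoWeight H n + 2 * (v ⬝ᵥ nbhdLoad H n p) := by
  have hload : nbhdLoad H (Function.update n p v) p = nbhdLoad H n p := funext fun k =>
    Finset.sum_congr rfl fun q _ => by
      split_ifs with h
      · rw [Function.update_of_ne h.ne']
      · rfl
  have hrest : ∀ a ∈ univ.erase p, Function.update n p v a = n a := fun a ha =>
    Function.update_of_ne (Finset.ne_of_mem_erase ha) _ _
  rw [monoWeight_eq_add H _ p, monoWeight_eq_add H n p, hload, Function.update_self]
  rw [Finset.sum_congr rfl fun a ha => Finset.sum_congr rfl fun b hb => by
    rw [hrest a ha, hrest b hb]]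
  ring

lemma exists_monoWeight_update_single_le [DecidableEq P] [DecidableEq K] [Nonempty K]
    (n : P → K → ℕ) (p : P) :
    ∃ c, monoWeight H (Function.update n p (Pi.single c (∑ k, n p k))) ≤ monoWeight H n := by
  obtain ⟨c, -, hc⟩ := Finset.exists_min_image univ (nbhdLoad H n p) univ_nonempty
  refine ⟨c, ?_⟩
  have hle : Pi.single c (∑ k, n p k) ⬝ᵥ nbhdLoad H n p ≤ n p ⬝ᵥ nbhdLoad H n p := by
    rw [single_dotProduct, Finset.sum_mul]
    exact Finset.sum_le_sum fun k _ => Nat.mul_le_mul_left _ (hc k (mem_univ k))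
  have hupdate := monoWeight_update_add H n p (Pi.single c (∑ k, n p k))
  omega

lemma exists_monoWeight_single_le [DecidableEq K] [Nonempty K] (m : P → ℕ) (n : P → K → ℕ)
    (hn : ∀ p, ∑ k, n p k = m p) :
    ∃ χ : P → K, monoWeight H (fun p => Pi.single (χ p) (m p)) ≤ monoWeight H n := by
  classical
  suffices ∀ F : Finset P, ∀ n : P → K → ℕ, (∀ p, ∑ k, n p k = m p) →
      (∀ p ∉ F, ∃ c, n p = Pi.single c (m p)) →
      ∃ χ : P → K, monoWeight H (fun p => Pi.single (χ p) (m p)) ≤ monoWeight H n from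
    this univ n hn fun p hp => absurd (mem_univ p) hp
  intro F
  induction F using Finset.induction_on with
  | empty =>
    intro n _ hpure
    choose χ hχ using fun p => hpure p (Finset.notMem_empty p)
    exact ⟨χ, le_of_eq (congrArg _ (funext hχ).symm)⟩
  | insert p F _ ih =>
    intro n hn hpure
    obtain ⟨c, hc⟩ := exists_monoWeight_update_single_le H n p
    rw [hn p] at hc
    obtain ⟨χ, hχ⟩ := ih (Function.update n p (Pi.single c (m p)))
      (fun q => by
        rcases eq_or_ne q p with rfl | hq
        · simp
        · rw [Function.update_of_ne hq, hn q])
      (fun q hq => by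
        rcases eq_or_ne q p with rfl | hqp
        · exact ⟨c, Function.update_self _ _ _⟩
        · rw [Function.update_of_ne hqp]
          exact hpure q (by simp [hq, hqp]))
    exact ⟨χ, hχ.trans hc⟩

lemma le_monoWeight_of_isEmpty_coloring [Nonempty K] (hH : IsEmpty (H.Coloring K))
    {m : P → ℕ} {B : ℕ} (hB : ∀ p q, H.Adj p q → B ≤ m p * m q) (n : P → K → ℕ)
    (hn : ∀ p, ∑ k, n p k = m p) : 2 * B ≤ monoWeight H n := by
  classical
  obtain ⟨χ, hχ⟩ := exists_monoWeight_single_le H m n hn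
  obtain ⟨p, q, hpq, hχpq⟩ : ∃ p q, H.Adj p q ∧ χ p = χ q := by
    by_contra! h
    exact hH.false (SimpleGraph.Coloring.mk χ fun hadj => h _ _ hadj)
  have hmono := two_mul_dotProduct_le_monoWeight H (fun p => Pi.single (χ p) (m p)) hpq
  rw [single_dotProduct, hχpq, Pi.single_eq_same] at hmono
  exact (Nat.mul_le_mul_left 2 (hB p q hpq)).trans (hmono.trans hχ)

end Weight

section Mono

variable {V K : Type*}

def monoSubgraph (G : SimpleGraph V) (φ : V → K) : SimpleGraph V where
  Adj u v := G.Adj u v ∧ φ u = φ v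
  symm := ⟨fun _ _ h => ⟨h.1.symm, h.2.symm⟩⟩
  loopless := ⟨fun _ h => G.irrefl h.1⟩

instance [DecidableEq K] (G : SimpleGraph V) [DecidableRel G.Adj] (φ : V → K) :
    DecidableRel (monoSubgraph G φ).Adj :=
  fun u v => inferInstanceAs (Decidable (G.Adj u v ∧ φ u = φ v))

lemma edgeSet_monoSubgraph_subset {G : SimpleGraph V} {S : Set (Sym2 V)}
    (φ : (G.deleteEdges S).Coloring K) : (monoSubgraph G φ).edgeSet ⊆ S := by
  intro e he
  induction e using Sym2.ind with
  | _ u v =>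
    rw [SimpleGraph.mem_edgeSet] at he
    by_contra hS
    exact φ.valid (SimpleGraph.deleteEdges_adj.mpr ⟨he.1, hS⟩) he.2

lemma card_fiber_dotProduct [Fintype K] [DecidableEq K] {α β : Type*} [Fintype α] [Fintype β]
    (f : α → K) (g : β → K) :
    (fun k => #{a | f a = k}) ⬝ᵥ (fun k => #{b | g b = k}) = ∑ a, #{b | f a = g b} := by
  simp only [dotProduct, card_filter, Finset.sum_mul_sum]
  rw [Finset.sum_comm]
  refine Finset.sum_congr rfl fun a _ => ?_
  rw [Finset.sum_comm]
  refine Finset.sum_congr rfl fun b _ => ?_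
  simp [Finset.sum_ite_eq]

end Mono

section Blowup

variable {P K : Type*} [Fintype K] [DecidableEq K] (m : P → ℕ)

instance (H : SimpleGraph P) [DecidableRel H.Adj] : DecidableRel (blowup H m).Adj :=
  fun u v => inferInstanceAs (Decidable (H.Adj u.1 v.1))

def colorCount (φ : (Σ p, Fin (m p)) → K) (p : P) : K → ℕ :=
  fun k => #{i : Fin (m p) | φ ⟨p, i⟩ = k}

lemma sum_colorCount (φ : (Σ p, Fin (m p)) → K) (p : P) :
    ∑ k, colorCount m φ p k = m p := by
  simp only [colorCount]
  rw [← card_eq_sum_card_fiberwise (fun i _ => mem_univ (φ ⟨p, i⟩)), card_univ,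
    Fintype.card_fin]

lemma two_mul_card_edgeFinset_monoSubgraph_blowup [Fintype P] (H : SimpleGraph P)
    [DecidableRel H.Adj] (φ : (Σ p, Fin (m p)) → K) :
    2 * #(monoSubgraph (blowup H m) φ).edgeFinset = monoWeight H (colorCount m φ) := by
  rw [← SimpleGraph.sum_degrees_eq_twice_card_edges, Fintype.sum_sigma, monoWeight]
  refine Finset.sum_congr rfl fun p _ => ?_
  simp only [← SimpleGraph.card_neighborFinset_eq_degree, SimpleGraph.neighborFinset_eq_filter,
    card_filter, Fintype.sum_sigma]
  rw [Finset.sum_comm]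
  refine Finset.sum_congr rfl fun q _ => ?_
  split_ifs with h
  · unfold colorCount
    rw [card_fiber_dotProduct]
    simp only [card_filter]
    exact Finset.sum_congr rfl fun a _ => Finset.sum_congr rfl fun b _ =>
      if_congr ⟨And.right, And.intro h⟩ rfl rfl
  · exact Finset.sum_eq_zero fun _ _ => Finset.sum_eq_zero fun _ _ => if_neg fun h' => h h'.1

end Blowup

lemma le_ncard_of_deleteEdges_coloring {P K : Type*} [Fintype P] [Fintype K] [Nonempty K]
    {H : SimpleGraph P} (hH : IsEmpty (H.Coloring K)) {m : P → ℕ} {B : ℕ}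
    (hB : ∀ p q, H.Adj p q → B ≤ m p * m q) {S : Set (Sym2 (Σ p, Fin (m p)))}
    (φ : ((blowup H m).deleteEdges S).Coloring K) : B ≤ S.ncard := by
  classical
  have hweight := le_monoWeight_of_isEmpty_coloring H hH hB _ (sum_colorCount m φ)
  rw [← two_mul_card_edgeFinset_monoSubgraph_blowup] at hweight
  have hS : #(monoSubgraph (blowup H m) φ).edgeFinset ≤ S.ncard := by
    rw [← Set.ncard_coe_finset, SimpleGraph.coe_edgeFinset]
    exact Set.ncard_le_ncard (edgeSet_monoSubgraph_subset φ)
  omega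

section CrossEdges

variable {P K : Type*} (m : P → ℕ)

def crossEdges (p q : P) : Set (Sym2 (Σ v, Fin (m v))) :=
  Set.range fun x : Fin (m p) × Fin (m q) => s(⟨p, x.1⟩, ⟨q, x.2⟩)

lemma crossEdges_subset_edgeSet {H : SimpleGraph P} {p q : P} (h : H.Adj p q) :
    crossEdges m p q ⊆ (blowup H m).edgeSet := by
  rintro _ ⟨x, rfl⟩
  exact h

lemma ncard_crossEdges {p q : P} (hpq : p ≠ q) : (crossEdges m p q).ncard = m p * m q := by
  rw [crossEdges, Set.ncard_range_of_injective, Nat.card_prod, Nat.card_eq_fintype_card,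
    Nat.card_eq_fintype_card, Fintype.card_fin, Fintype.card_fin]
  rintro ⟨i, j⟩ ⟨i', j'⟩ h
  rcases Sym2.eq_iff.mp h with ⟨hi, hj⟩ | ⟨hi, -⟩
  · simp_all
  · exact absurd (congrArg Sigma.fst hi) hpq

def IsProperExcept (H : SimpleGraph P) (χ : P → K) (e : Sym2 P) : Prop :=
  ∀ ⦃a b⦄, H.Adj a b → χ a = χ b → s(a, b) = e

lemma IsProperExcept.colorable_deleteEdges_crossEdges [Fintype K] {H : SimpleGraph P}
    {χ : P → K} {p q : P} (hχ : IsProperExcept H χ s(p, q)) :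
    ((blowup H m).deleteEdges (crossEdges m p q)).Colorable (Fintype.card K) := by
  refine (SimpleGraph.Coloring.mk (χ ∘ Sigma.fst) ?_).colorable
  rintro ⟨a, i⟩ ⟨b, j⟩ hadj hχab
  obtain ⟨hab, hS⟩ := SimpleGraph.deleteEdges_adj.mp hadj
  rcases Sym2.eq_iff.mp (hχ hab hχab) with ⟨rfl, rfl⟩ | ⟨rfl, rfl⟩
  · exact hS ⟨(i, j), rfl⟩
  · exact hS ⟨(j, i), Sym2.eq_swap⟩

lemma IsProperExcept.join_sumMap {α β L : Type*} {G : SimpleGraph α} {H : SimpleGraph β}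
    (ψ : G.Coloring L) {χ : β → K} {p q : β} (hχ : IsProperExcept H χ s(p, q)) :
    IsProperExcept (join G H) (Sum.map ψ χ) s(.inr p, .inr q) := by
  rintro (a | a) (b | b) hab h
  · exact absurd (Sum.inl.inj h) (ψ.valid hab)
  · cases h
  · cases h
  · simpa using congrArg (Sym2.map (Sum.inr : β → α ⊕ β)) (hχ hab (Sum.inr.inj h))

end CrossEdges

lemma join_adj_inr {α β : Type*} {G : SimpleGraph α} {H : SimpleGraph β} {a b : β} :
    (join G H).Adj (.inr a) (.inr b) ↔ H.Adj a b := Iff.rfl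

lemma SimpleGraph.Colorable.of_join_top {β : Type*} {H : SimpleGraph β} {n k : ℕ}
    (h : (join (⊤ : SimpleGraph (Fin n)) H).Colorable k) : H.Colorable (k - n) := by
  classical
  obtain ⟨χ⟩ := h
  have hinj : Function.Injective (χ ∘ Sum.inl) := fun i j hij => by
    by_contra hne
    exact χ.valid (show (join ⊤ H).Adj (.inl i) (.inl j) from hne) hij
  let T : Finset (Fin k) := (univ.image (χ ∘ Sum.inl))ᶜ
  have hT : #T = k - n := by
    rw [card_compl, card_image_of_injective _ hinj, card_univ, Fintype.card_fin, Fintype.card_fin]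
  have hmem : ∀ v, χ (.inr v) ∈ T := fun v => by
    simp only [T, mem_compl, mem_image, mem_univ, true_and, Function.comp_apply, not_exists]
    exact fun i => χ.valid (show (join ⊤ H).Adj (.inl i) (.inr v) from trivial)
  have := (SimpleGraph.Coloring.mk (fun v => (⟨χ (.inr v), hmem v⟩ : T)) fun {u v} huv h =>
    χ.valid (show (join ⊤ H).Adj (.inr u) (.inr v) from huv) (congrArg Subtype.val h)).colorable
  rwa [Fintype.card_coe, hT] at this

instance : DecidableRel C5.Adj := fun v u => decidable_of_iff' _ (SimpleGraph.fromRel_adj _ v u)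

lemma C5_adj_add_one (v : ZMod 5) : C5.Adj v (v + 1) := by
  revert v
  decide

lemma not_colorable_two_C5 : ¬ C5.Colorable 2 := by
  rintro ⟨f⟩
  have : ∀ g : ZMod 5 → Fin 2, ∃ v, g v = g (v + 1) := by decide
  obtain ⟨v, hv⟩ := this f
  exact f.valid (C5_adj_add_one v) hv

lemma Dr_eq_of {V : Type*} {G : SimpleGraph V} {r b : ℕ}
    (hS : ∃ S ⊆ G.edgeSet, S.ncard = b ∧ (G.deleteEdges S).Colorable r)
    (hle : ∀ S ⊆ G.edgeSet, (G.deleteEdges S).Colorable r → b ≤ S.ncard) : Dr G r = b := by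
  obtain ⟨S, hSG, rfl, hS⟩ := hS
  exact le_antisymm (Nat.sInf_le ⟨S, hSG, rfl, hS⟩)
    (le_csInf ⟨_, S, hSG, rfl, hS⟩ fun _ ⟨T, hTG, hT, hTc⟩ => hT ▸ hle T hTG hTc)

lemma mul_le_mul_of_adj {P : Type*} {H : SimpleGraph P} {m : P → ℕ} {x : P} {t : ℕ}
    (hx : ∀ p, m x ≤ m p) (ht : ∀ p ≠ x, t ≤ m p) {p q : P} (h : H.Adj p q) :
    m x * t ≤ m p * m q := by
  by_cases hp : p = x
  · subst hp
    exact Nat.mul_le_mul le_rfl (ht q h.ne')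
  · rw [mul_comm]
    exact Nat.mul_le_mul (ht p hp) (hx q)

lemma not_colorable_join_top_C5 {r : ℕ} (hr : 2 ≤ r) :
    ¬ (join (⊤ : SimpleGraph (Fin (r - 2))) C5).Colorable r := fun h =>
  not_colorable_two_C5 (by simpa [Nat.sub_sub_self hr] using h.of_join_top)

lemma exists_colorable_deleteEdges_blowup_join_C5 {r : ℕ} (hr : 2 ≤ r)
    (m : Fin (r - 2) ⊕ ZMod 5 → ℕ) {w : ZMod 5} (hw : C5.Adj 0 w) {c : ZMod 5 → ZMod 2}
    (hc : IsProperExcept C5 c s(0, w)) :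
    ∃ S ⊆ (blowup (join (⊤ : SimpleGraph (Fin (r - 2))) C5) m).edgeSet,
      S.ncard = m (.inr 0) * m (.inr w) ∧
      ((blowup (join (⊤ : SimpleGraph (Fin (r - 2))) C5) m).deleteEdges S).Colorable r := by
  refine ⟨_, crossEdges_subset_edgeSet m (join_adj_inr.mpr hw),
    ncard_crossEdges m (Sum.inr_injective.ne hw.ne), ?_⟩
  have := IsProperExcept.colorable_deleteEdges_crossEdges m
    (hc.join_sumMap (⊤ : SimpleGraph (Fin (r - 2))).selfColoring)
  rwa [Fintype.card_sum, Fintype.card_fin, ZMod.card, Nat.sub_add_cancel hr] at this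

theorem stmt11_general (r : ℕ) (hr : 2 ≤ r)
    (m : Fin (r - 2) ⊕ ZMod 5 → ℕ)
    (hXA : m (.inr 0) ≤ m (.inr 4)) (hXB : m (.inr 0) ≤ m (.inr 1))
    (hA : ∀ i, m (.inr 4) ≤ m (.inl i)) (hAC : m (.inr 4) ≤ m (.inr 2))
    (hAD : m (.inr 4) ≤ m (.inr 3)) :
    Dr (blowup (join (⊤ : SimpleGraph (Fin (r - 2))) C5) m) r =
      m (.inr 0) * min (m (.inr 4)) (m (.inr 1)) := by
  have hX : ∀ p, m (.inr 0) ≤ m p := by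
    rintro (i | v)
    · exact hXA.trans (hA i)
    · fin_cases v
      exacts [le_rfl, hXB, hXA.trans hAC, hXA.trans hAD, hXA]
  have hAB : ∀ p ≠ .inr 0, min (m (.inr 4)) (m (.inr 1)) ≤ m p := by
    rintro (i | v) hv
    · exact min_le_iff.mpr (.inl (hA i))
    · fin_cases v
      exacts [absurd rfl hv, min_le_right _ _, min_le_iff.mpr (.inl hAC),
        min_le_iff.mpr (.inl hAD), min_le_left _ _]
  refine Dr_eq_of ?_ fun S _ hS => ?_
  · rcases le_total (m (.inr 4)) (m (.inr 1)) with h | h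
    · rw [min_eq_left h]
      exact exists_colorable_deleteEdges_blowup_join_C5 hr m (by decide)
        (c := fun v => (v.val : ZMod 2)) (by unfold IsProperExcept; decide)
    · rw [min_eq_right h]
      exact exists_colorable_deleteEdges_blowup_join_C5 hr m (by decide)
        (c := fun v => ((v - 1).val : ZMod 2)) (by unfold IsProperExcept; decide)
  · have : NeZero r := ⟨by omega⟩
    obtain ⟨φ⟩ := hS
    exact le_ncard_of_deleteEdges_coloring (not_nonempty_iff.mp (not_colorable_join_top_C5 hr))
      (fun _ _ => mul_le_mul_of_adj hX hAB) φ

/-- For a complete blow-up of `C_5` (parts `A, X, B, C, D` in cyclic order)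
joined to `r-2` further independent sets, if `|X|` is smallest and `|A|, |B|`
are the next two smallest part sizes, then exactly `|X|·min(|A|,|B|)` edges
must be deleted to make the graph `r`-partite. -/
theorem stmt11 (r : ℕ) (hr : 2 ≤ r)
    (m : Fin (r - 2) ⊕ ZMod 5 → ℕ)
    (hXA : m (.inr 0) ≤ m (.inr 4)) (hXB : m (.inr 0) ≤ m (.inr 1))
    (hA : ∀ i, m (.inr 4) ≤ m (.inl i)) (hAC : m (.inr 4) ≤ m (.inr 2))
    (hAD : m (.inr 4) ≤ m (.inr 3))
    (hB : ∀ i, m (.inr 1) ≤ m (.inl i)) (hBC : m (.inr 1) ≤ m (.inr 2))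
    (hBD : m (.inr 1) ≤ m (.inr 3)) :
    Dr (blowup (join (⊤ : SimpleGraph (Fin (r - 2))) C5) m) r =
      m (.inr 0) * min (m (.inr 4)) (m (.inr 1)) :=
  stmt11_general r hr m hXA hXB hA hAC hAD
end

section
/- Let G be a graph on n vertices and let V(G) = V_1 ∪ ... ∪ V_r be a partition. Suppose for each i, the set B_i of vertices v ∈ V_i with at least |V(G)\V_i| - c neighbors outside V_i satisfies |B_i| ≥ m, and suppose the total number of non-edges between distinct parts restricted to B_1 × ... × B_r is less than m² (i.e., Σ_{i<j} (|B_i||B_j| - e(B_i,B_j)) < m²). Then G contains a clique x_1, ..., x_r with x_i ∈ B_i. -/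
open Finset Fintype Function

section Transversals

variable {ι α : Type*} [Fintype ι] [DecidableEq ι] [DecidableEq α]

lemma card_filter_piFinset_eq_and_eq (B : ι → Finset α) {i j : ι} (hij : i ≠ j) {a b : α}
    (ha : a ∈ B i) (hb : b ∈ B j) :
    #{x ∈ piFinset B | x i = a ∧ x j = b} = ∏ k, if k = i ∨ k = j then 1 else #(B k) := by
  have hb' : b ∈ update B i {a} j := by rwa [update_of_ne hij.symm]
  rw [← filter_filter, ← piFinset_update_singleton_eq_filter_piFinset_eq _ _ ha,
    ← piFinset_update_singleton_eq_filter_piFinset_eq _ _ hb', card_piFinset]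
  refine Fintype.prod_congr _ _ fun k => ?_
  rcases eq_or_ne k j with rfl | hkj
  · simp
  rcases eq_or_ne k i with rfl | hki
  · simp [hkj]
  · simp [hki, hkj]

lemma card_filter_piFinset_pair (B : ι → Finset α) {i j : ι} (hij : i ≠ j)
    (p : α → α → Prop) [DecidableRel p] :
    #{x ∈ piFinset B | p (x i) (x j)} =
      #{q ∈ B i ×ˢ B j | p q.1 q.2} * ∏ k, if k = i ∨ k = j then 1 else #(B k) := by
  rw [card_eq_sum_card_fiberwise (f := fun x => (x i, x j))
    (t := {q ∈ B i ×ˢ B j | p q.1 q.2}), ← smul_eq_mul, ← sum_const]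
  · refine sum_congr rfl fun q hq => ?_
    simp only [mem_filter, mem_product] at hq
    rw [← card_filter_piFinset_eq_and_eq B hij hq.1.1 hq.1.2, filter_filter]
    congr 1
    refine filter_congr fun x _ => ?_
    obtain ⟨a, b⟩ := q
    constructor
    · rintro ⟨-, h⟩
      simpa only [Prod.mk.injEq] using h
    · rintro ⟨rfl, rfl⟩
      exact ⟨hq.2, rfl⟩
  · intro x hx
    simp only [coe_filter, Fintype.mem_piFinset, Set.mem_ofPred_eq, mem_product] at hx ⊢
    exact ⟨⟨hx.1 i, hx.1 j⟩, hx.2⟩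

lemma card_filter_piFinset_mul (B : ι → Finset α) {i j : ι} (hij : i ≠ j)
    (p : α → α → Prop) [DecidableRel p] :
    #{x ∈ piFinset B | p (x i) (x j)} * (#(B i) * #(B j)) =
      #{q ∈ B i ×ˢ B j | p q.1 q.2} * #(piFinset B) := by
  have hP := card_filter_piFinset_pair B hij fun _ _ => True
  simp only [filter_true_of_mem, implies_true, card_product] at hP
  rw [card_filter_piFinset_pair B hij p, hP]
  ring

end Transversals

theorem SimpleGraph.exists_pairwise_adj_of_sum_card_nonadj_lt {ι α : Type*} [Fintype ι]
    [LinearOrder ι] [DecidableEq α] (G : SimpleGraph α) [DecidableRel G.Adj]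
    (B : ι → Finset α) {m : ℕ} (hsize : ∀ i, m ≤ #(B i))
    (hmiss : ∑ i, ∑ j with i < j, #{q ∈ B i ×ˢ B j | ¬ G.Adj q.1 q.2} < m ^ 2) :
    ∃ x : ι → α, (∀ i, x i ∈ B i) ∧ Pairwise fun i j => G.Adj (x i) (x j) := by
  classical
  set P := piFinset B
  set bad : ι → ι → Finset (ι → α) := fun i j => {x ∈ P | ¬ G.Adj (x i) (x j)}
  have hbad_sub : {x ∈ P | ¬ Pairwise fun i j => G.Adj (x i) (x j)} ⊆
      univ.biUnion fun i => ({j | i < j} : Finset ι).biUnion (bad i) := by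
    intro x hx
    obtain ⟨hxP, hx⟩ := mem_filter.mp hx
    obtain ⟨i, j, hij, hnadj⟩ : ∃ i j, i ≠ j ∧ ¬ G.Adj (x i) (x j) := by
      simpa [Pairwise] using hx
    simp only [mem_biUnion, mem_univ, mem_filter, true_and, bad]
    rcases hij.lt_or_gt with hlt | hgt
    · exact ⟨i, j, hlt, hxP, hnadj⟩
    · exact ⟨j, i, hgt, hxP, fun h => hnadj h.symm⟩
  have hbad_card (i j : ι) (hij : i < j) :
      #(bad i j) * m ^ 2 ≤ #{q ∈ B i ×ˢ B j | ¬ G.Adj q.1 q.2} * #P :=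
    calc #(bad i j) * m ^ 2 ≤ #(bad i j) * (#(B i) * #(B j)) := by
          rw [sq]; gcongr <;> apply hsize
      _ = _ := card_filter_piFinset_mul B hij.ne fun a b => ¬ G.Adj a b
  have hm : 0 < m := Nat.pos_of_ne_zero fun h => by simp [h] at hmiss
  have hP : 0 < #P := by
    rw [card_piFinset]
    exact prod_pos fun i _ => hm.trans_le (hsize i)
  have hlt : #{x ∈ P | ¬ Pairwise fun i j => G.Adj (x i) (x j)} * m ^ 2 < #P * m ^ 2 :=
    calc _ ≤ (∑ i, ∑ j with i < j, #(bad i j)) * m ^ 2 := by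
          gcongr
          exact (card_le_card hbad_sub).trans
            (card_biUnion_le.trans (sum_le_sum fun i _ => card_biUnion_le))
      _ ≤ (∑ i, ∑ j with i < j, #{q ∈ B i ×ˢ B j | ¬ G.Adj q.1 q.2}) * #P := by
          simp only [sum_mul]
          exact sum_le_sum fun i _ => sum_le_sum fun j hj => hbad_card i j (mem_filter.mp hj).2
      _ < m ^ 2 * #P := by gcongr
      _ = #P * m ^ 2 := mul_comm _ _
  obtain ⟨x, hxP, hx⟩ := exists_mem_notMem_of_card_lt_card (Nat.lt_of_mul_lt_mul_right hlt)
  exact ⟨x, Fintype.mem_piFinset.mp hxP, by simpa [hxP] using hx⟩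

lemma eBtw_le_card_filter_adj {α : Type*} (G : SimpleGraph α) [DecidableRel G.Adj]
    (A B : Finset α) : eBtw G A B ≤ #{q ∈ A ×ˢ B | G.Adj q.1 q.2} := by
  rw [eBtw, ← Set.ncard_coe_finset]
  refine (Set.ncard_le_ncard ?_ (Set.toFinite _)).trans
    (Set.ncard_image_le (f := fun q => s(q.1, q.2)) (Set.toFinite _))
  rintro e ⟨he, u, hu, v, hv, rfl⟩
  exact ⟨(u, v), mem_filter.mpr ⟨mem_product.mpr ⟨hu, hv⟩, he⟩, rfl⟩

lemma card_filter_not_adj_le_sub_eBtw {α : Type*} (G : SimpleGraph α) [DecidableRel G.Adj]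
    (A B : Finset α) : #{q ∈ A ×ˢ B | ¬ G.Adj q.1 q.2} ≤ #A * #B - eBtw G A B := by
  have := card_filter_add_card_filter_not (s := A ×ˢ B) fun q => G.Adj q.1 q.2
  have := eBtw_le_card_filter_adj G A B
  rw [card_product] at *
  omega

theorem stmt12_general (r n m : ℕ)
    (G : SimpleGraph (Fin n))
    (B : Fin r → Finset (Fin n))
    (hsize : ∀ i, m ≤ (B i).card)
    (hmiss : (∑ i, ∑ j, if i < j then
        (B i).card * (B j).card - eBtw G (B i : Set (Fin n)) (B j : Set (Fin n))
      else 0) < m ^ 2) :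
    ∃ x : Fin r → Fin n, (∀ i, x i ∈ B i) ∧
      ∀ i j, i ≠ j → G.Adj (x i) (x j) := by
  classical
  refine G.exists_pairwise_adj_of_sum_card_nonadj_lt B hsize (lt_of_le_of_lt ?_ hmiss)
  simp only [← sum_filter]
  gcongr with i _ j _
  exact card_filter_not_adj_le_sub_eBtw G (B i) (B j)

/-- If each part `V_i` contains at least `m` "big" vertices (vertices with at
least `|V \ V_i| - c` neighbors outside `V_i`) and fewer than `m²` non-edges
are missing between the sets of big vertices, then `G` has a transversal
clique `x_1 ∈ B_1, …, x_r ∈ B_r`. -/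
theorem stmt12 (r n c m : ℕ) (hr : 2 ≤ r)
    (G : SimpleGraph (Fin n)) [DecidableRel G.Adj]
    (V : Fin r → Finset (Fin n))
    (hdisj : ∀ i j, i ≠ j → Disjoint (V i) (V j))
    (hcover : Finset.univ.biUnion V = Finset.univ)
    (B : Fin r → Finset (Fin n))
    (hB : ∀ i, B i = (V i).filter (fun v =>
      (Finset.univ \ V i).card ≤ ((Finset.univ \ V i).filter (fun w => G.Adj v w)).card + c))
    (hsize : ∀ i, m ≤ (B i).card)
    (hmiss : (∑ i, ∑ j, if i < j then
        (B i).card * (B j).card - eBtw G (B i : Set (Fin n)) (B j : Set (Fin n))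
      else 0) < m ^ 2) :
    ∃ x : Fin r → Fin n, (∀ i, x i ∈ B i) ∧
      ∀ i j, i ≠ j → G.Adj (x i) (x j) :=
  stmt12_general r n m G B hsize hmiss
end

section
/- Let G be an n-vertex K_{r+1}-free graph and let x_1, ..., x_r be vertices forming a clique K_r in G. Define X_i to be the common neighborhood of {x_1,...,x_r} \ {x_i}, and X = V(G) \ (X_1 ∪ ... ∪ X_r). Then each X_i is an independent set, the sets X_1, ..., X_r, X are pairwise disjoint (they partition V(G)), and Σ_{i=1}^r deg(x_i) ≤ n(r-1) - |X|. -/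
/-!
Adding a common neighbour to the clique `x` would create a `K_{r+1}`, so every vertex misses
some `x i`. Two adjacent vertices of `X_i` would give such a common neighbour of the clique
obtained by replacing `x i` with one of them; a vertex of two different `X_i` would be one
itself. For the count, a vertex outside every `X_i` misses at least two of the `x i`, so each
vertex `v` contributes at most `r - 1` to `∑ deg(x_i) + |X|` once the degrees are counted from
the side of `v`.
-/

open Finset Function

namespace SimpleGraph

variable {V ι : Type*} {G : SimpleGraph V} {x : ι → V}

theorem forall_adj_of_ne_of_forall_ne_adj {i j : ι} (hij : i ≠ j) {v : V}
    (hi : ∀ k, k ≠ i → G.Adj (x k) v) (hj : ∀ k, k ≠ j → G.Adj (x k) v) (k : ι) :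
    G.Adj (x k) v := by
  rcases eq_or_ne k i with rfl | hk
  · exact hj k hij
  · exact hi k hk

variable [Fintype ι]

theorem exists_not_adj_of_pairwise_adj (hx : Pairwise (G.Adj on x))
    (hG : G.CliqueFree (Fintype.card ι + 1)) (v : V) : ∃ i, ¬ G.Adj (x i) v := by
  classical
  by_contra! hv
  have hinj : Injective x := fun i j hxij ↦ by
    by_contra hij
    exact (hx hij).ne hxij
  have hclique : G.IsNClique (Fintype.card ι) (univ.map ⟨x, hinj⟩) := by
    refine ⟨?_, by rw [card_map, card_univ]⟩
    rw [coe_map, coe_univ, Set.image_univ]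
    rintro _ ⟨i, rfl⟩ _ ⟨j, rfl⟩ hne
    exact hx fun hij ↦ hne (congrArg x hij)
  refine hG _ (hclique.insert (a := v) fun b hb ↦ ?_)
  obtain ⟨i, -, rfl⟩ := mem_map.mp hb
  exact (hv i).symm

theorem not_adj_of_forall_ne_adj (hx : Pairwise (G.Adj on x))
    (hG : G.CliqueFree (Fintype.card ι + 1)) (i : ι) {u v : V}
    (hu : ∀ j, j ≠ i → G.Adj (x j) u) (hv : ∀ j, j ≠ i → G.Adj (x j) v) : ¬ G.Adj u v := by
  classical
  intro huv
  have hy : Pairwise (G.Adj on update x i u) := by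
    intro j k hjk
    by_cases hj : j = i <;> by_cases hk : k = i
    · exact absurd (hj.trans hk.symm) hjk
    · subst hj
      simpa [onFun, hk] using (hu k hk).symm
    · subst hk
      simpa [onFun, hj] using hu j hj
    · simpa [onFun, hj, hk] using hx hjk
  obtain ⟨j, hj⟩ := exists_not_adj_of_pairwise_adj hy hG v
  rcases eq_or_ne j i with rfl | hji
  · simp [huv] at hj
  · simp [hji, hv j hji] at hj

theorem one_lt_card_filter_not_adj [DecidableRel G.Adj] (hx : Pairwise (G.Adj on x))
    (hG : G.CliqueFree (Fintype.card ι + 1)) {v : V}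
    (hv : ∀ i, ∃ j, j ≠ i ∧ ¬ G.Adj (x j) v) : 1 < #{i | ¬ G.Adj (x i) v} := by
  obtain ⟨i, hi⟩ := exists_not_adj_of_pairwise_adj hx hG v
  obtain ⟨j, hji, hj⟩ := hv i
  exact one_lt_card.mpr ⟨i, by simpa using hi, j, by simpa using hj, hji.symm⟩

open Classical in
theorem card_filter_adj_add_ite_le [DecidableRel G.Adj] (hx : Pairwise (G.Adj on x))
    (hG : G.CliqueFree (Fintype.card ι + 1)) (v : V) :
    #{i | G.Adj (x i) v} + (if ∀ i, ∃ j, j ≠ i ∧ ¬ G.Adj (x j) v then 1 else 0) ≤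
      Fintype.card ι - 1 := by
  have hsplit := card_filter_add_card_filter_not (s := univ) fun i ↦ G.Adj (x i) v
  rw [card_univ] at hsplit
  split_ifs with h
  · have := one_lt_card_filter_not_adj hx hG h
    omega
  · obtain ⟨i, hi⟩ := exists_not_adj_of_pairwise_adj hx hG v
    have : 0 < #{i | ¬ G.Adj (x i) v} := card_pos.mpr ⟨i, by simpa using hi⟩
    omega

theorem sum_degree_add_ncard_le [Fintype V] [DecidableRel G.Adj] (hx : Pairwise (G.Adj on x))
    (hG : G.CliqueFree (Fintype.card ι + 1)) :
    ∑ i, G.degree (x i) + {v | ∀ i, ∃ j, j ≠ i ∧ ¬ G.Adj (x j) v}.ncard ≤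
      (Fintype.card ι - 1) * Fintype.card V := by
  classical
  have hdeg : ∑ i, G.degree (x i) = ∑ v, #{i | G.Adj (x i) v} := by
    simp only [← card_neighborFinset_eq_degree, neighborFinset_eq_filter]
    exact sum_card_bipartiteAbove_eq_sum_card_bipartiteBelow _
  rw [hdeg, Set.ncard_eq_toFinset_card', Set.toFinset_ofPred, card_filter, ← sum_add_distrib]
  calc _ ≤ ∑ _v : V, (Fintype.card ι - 1) :=
        sum_le_sum fun v _ ↦ card_filter_adj_add_ite_le hx hG v
    _ = _ := by rw [sum_const, card_univ, smul_eq_mul, mul_comm]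

end SimpleGraph

open SimpleGraph

/-- Given a clique `x_1, …, x_r` in a `K_{r+1}`-free graph `G` on `n`
vertices, the common neighborhoods `X_i` of `{x_1,…,x_r} \ {x_i}` are
independent, pairwise disjoint, and `∑ deg(x_i) ≤ n(r-1) - |X|` where
`X` is the set of vertices in no `X_i`. -/
theorem stmt13 (r n : ℕ) (G : SimpleGraph (Fin n)) [DecidableRel G.Adj]
    (hfree : G.CliqueFree (r + 1))
    (x : Fin r → Fin n) (hclique : ∀ i j, i ≠ j → G.Adj (x i) (x j))
    (X' : Fin r → Set (Fin n))
    (hX' : ∀ i, X' i = {v | ∀ j, j ≠ i → G.Adj (x j) v})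
    (X : Set (Fin n)) (hX : X = Set.univ \ ⋃ i, X' i) :
    (∀ i, ∀ u ∈ X' i, ∀ v ∈ X' i, ¬ G.Adj u v) ∧
    (∀ i j, i ≠ j → Disjoint (X' i) (X' j)) ∧
    (∀ i, Disjoint (X' i) X) ∧
    ((⋃ i, X' i) ∪ X = Set.univ) ∧
    (∑ i, G.degree (x i)) + X.ncard ≤ (r - 1) * n := by
  have hx : Pairwise (G.Adj on x) := hclique
  rw [← Fintype.card_fin r] at hfree
  have hmem : ∀ i v, v ∈ X' i ↔ ∀ j, j ≠ i → G.Adj (x j) v := fun i v ↦ by rw [hX' i]; rfl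
  refine ⟨fun i u hu v hv ↦ not_adj_of_forall_ne_adj hx hfree i ((hmem i u).mp hu)
      ((hmem i v).mp hv), fun i j hij ↦ Set.disjoint_left.mpr fun v hi hj ↦ ?_,
    fun i ↦ hX ▸ Set.disjoint_sdiff_right.mono_left (Set.subset_iUnion X' i), by simp [hX], ?_⟩
  · obtain ⟨k, hk⟩ := exists_not_adj_of_pairwise_adj hx hfree v
    exact hk (forall_adj_of_ne_of_forall_ne_adj hij ((hmem i v).mp hi) ((hmem j v).mp hj) k)
  · have hXeq : X = {v | ∀ i, ∃ j, j ≠ i ∧ ¬ G.Adj (x j) v} := by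
      ext v
      simp [hX, hmem]
    simpa [hXeq] using sum_degree_add_ncard_le hx hfree
end
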